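/- Rank comparison via a functional equation of generating functions: let f, g be formal power series over ℝ and α, β, γ ∈ ℝ with f(0) ≠ α, g(0) ≠ 0, and f·g = α·g + β·x·g + γ (as formal power series). Then for every d ∈ ℕ, rank(H[f]^{(d,d)}) ≥ rank(H[g]^{(d,d)}) − 3, where H[h]^{(d,d)} is the (d+1)×(d+1) Hankel matrix of the coefficients of h. -/

import Mathlib

/-!
Let `T` be the lower triangular Toeplitz matrix of `g`. The congruence `T H[f] Tᵀ` has the
bivariate generating function `g(x) g(y) (x f(x) - y f(y)) / (x - y)`, and substituting
`f g = α g + β x g + γ` turns it into `-γ H[g]` plus the two rank-one terms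
`g ⊗ (f g) + (f g - α g) ⊗ g`. As `γ = (f(0) - α) g(0) ≠ 0`, this gives
`rank H[g] ≤ rank H[f] + 2`.
-/

noncomputable def hankel (d : ℕ) (h : PowerSeries ℝ) : Matrix (Fin (d + 1)) (Fin (d + 1)) ℝ :=
  Matrix.of fun i j => PowerSeries.coeff ((i : ℕ) + j) h

open Finset PowerSeries

namespace Matrix

variable {m n K : Type*} [Fintype n] [Field K]

theorem rank_add_le (A B : Matrix m n K) : (A + B).rank ≤ A.rank + B.rank := by
  rw [rank, rank, rank, mulVecLin_add]
  exact (Submodule.finrank_mono (LinearMap.range_add_le _ _)).trans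
    (Submodule.finrank_add_le_finrank_add_finrank _ _)

theorem rank_neg (A : Matrix m n K) : (-A).rank = A.rank := by
  rw [← neg_one_smul K A,
    rank_smul_of_mem_nonZeroDivisors _ (mem_nonZeroDivisors_of_ne_zero (neg_ne_zero.2 one_ne_zero))]

theorem rank_sub_le (A B : Matrix m n K) : (A - B).rank ≤ A.rank + B.rank := by
  simpa only [sub_eq_add_neg, rank_neg] using rank_add_le A (-B)

end Matrix

theorem Fin.sum_ite_val_le {M : Type*} [AddCommMonoid M] {n : ℕ} (i : Fin n) (φ : ℕ → M) :
    ∑ a : Fin n, (if (a : ℕ) ≤ i then φ a else 0) = ∑ a ∈ range (i + 1), φ a := by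
  rw [Fin.sum_univ_eq_sum_range (fun a => if a ≤ (i : ℕ) then φ a else 0), ← sum_filter]
  congr 1
  ext a
  simp only [mem_filter, mem_range]
  omega

/-- This is the cancellation of the factor `x - y` in bivariate generating functions:
`(x - y) Σ N i j xⁱ yʲ` has coefficients `N (i - 1) j - N i (j - 1)`. -/
theorem eq_of_apply_zero_eq_of_displacement_eq {M : Type*} [AddGroup M] {N N' : ℕ → ℕ → M}
    (h0 : N 0 = N' 0) (hD : ∀ i j, N (i + 1) j - N i (j + 1) = N' (i + 1) j - N' i (j + 1)) :
    N = N' := by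
  funext i
  induction i with
  | zero => exact h0
  | succ i ih =>
    funext j
    simpa only [congrFun ih (j + 1), sub_left_inj] using hD i j

noncomputable section

namespace PowerSeries

variable {R : Type*} [CommRing R]

theorem sum_range_coeff_mul_coeff_sub (f g : R⟦X⟧) (n : ℕ) :
    ∑ k ∈ range (n + 1), coeff k f * coeff (n - k) g = coeff n (f * g) := by
  rw [coeff_mul, Nat.sum_antidiagonal_eq_sum_range_succ fun a b => coeff a f * coeff b g]

/-- With `T` the infinite lower triangular Toeplitz matrix of `g` and `H` the infinite Hankel
matrix of `f`, `hankelToeplitz f g = H Tᵀ` and `hankelCongr f g = T H Tᵀ`. -/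
def hankelToeplitz (f g : R⟦X⟧) (a j : ℕ) : R :=
  ∑ b ∈ range (j + 1), coeff (a + b) f * coeff (j - b) g

def hankelCongr (f g : R⟦X⟧) (i j : ℕ) : R :=
  ∑ a ∈ range (i + 1), coeff (i - a) g * hankelToeplitz f g a j

theorem hankelToeplitz_zero_left (f g : R⟦X⟧) (j : ℕ) :
    hankelToeplitz f g 0 j = coeff j (f * g) := by
  simp only [hankelToeplitz, zero_add, sum_range_coeff_mul_coeff_sub]

theorem hankelToeplitz_succ_right (f g : R⟦X⟧) (a j : ℕ) :
    hankelToeplitz f g a (j + 1) = coeff a f * coeff (j + 1) g + hankelToeplitz f g (a + 1) j := by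
  rw [hankelToeplitz, sum_range_succ', add_comm, hankelToeplitz]
  simp only [add_zero, Nat.sub_zero, Nat.add_sub_add_right, add_right_comm a 1, ← add_assoc]

theorem hankelCongr_zero_left (f g : R⟦X⟧) (j : ℕ) :
    hankelCongr f g 0 j = coeff 0 g * coeff j (f * g) := by
  simp [hankelCongr, hankelToeplitz_zero_left]

theorem hankelCongr_succ_left_sub (f g : R⟦X⟧) (i j : ℕ) :
    hankelCongr f g (i + 1) j - hankelCongr f g i (j + 1)
      = coeff (i + 1) g * coeff j (f * g) - coeff i (f * g) * coeff (j + 1) g := by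
  have hleft : hankelCongr f g (i + 1) j
      = ∑ a ∈ range (i + 1), coeff (i - a) g * hankelToeplitz f g (a + 1) j
        + coeff (i + 1) g * coeff j (f * g) := by
    rw [hankelCongr, sum_range_succ']
    simp only [Nat.add_sub_add_right, Nat.sub_zero, hankelToeplitz_zero_left]
  have hright : hankelCongr f g i (j + 1)
      = coeff i (f * g) * coeff (j + 1) g
        + ∑ a ∈ range (i + 1), coeff (i - a) g * hankelToeplitz f g (a + 1) j := by
    simp only [hankelCongr, hankelToeplitz_succ_right, mul_add, sum_add_distrib]
    rw [← sum_range_coeff_mul_coeff_sub f g i, sum_mul]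
    congr 1
    exact sum_congr rfl fun a _ => by ring
  rw [hleft, hright]
  ring

theorem hankelCongr_add_mul_coeff_add {f g : R⟦X⟧} {α β γ : R}
    (heq : f * g = C α * g + C β * X * g + C γ) (i j : ℕ) :
    hankelCongr f g i j + γ * coeff (i + j) g
      = coeff i g * coeff j (f * g) + coeff i (f * g - C α * g) * coeff j g := by
  have ht : f * g - C α * g = C β * X * g + C γ := by rw [heq]; ring
  set t := f * g - C α * g
  have ht_zero : coeff 0 t = γ := by simp [ht]
  have ht_succ (n : ℕ) : coeff (n + 1) t = β * coeff n g := by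
    simp [ht, mul_assoc, coeff_succ_X_mul]
  have hfg (n : ℕ) : coeff n (f * g) = α * coeff n g + coeff n t := by simp [t]
  refine congrFun (congrFun (eq_of_apply_zero_eq_of_displacement_eq
    (N := fun i j => hankelCongr f g i j + γ * coeff (i + j) g)
    (N' := fun i j => coeff i g * coeff j (f * g) + coeff i t * coeff j g) ?_ ?_) i) j
  · funext j
    simp [hankelCongr_zero_left, ht_zero]
  · intro i j
    simp only [add_sub_add_comm, hankelCongr_succ_left_sub, add_right_comm i 1 j, ← add_assoc,
      hfg i, hfg (j + 1), ht_succ]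
    ring

def lowerToeplitz (d : ℕ) (g : R⟦X⟧) : Matrix (Fin (d + 1)) (Fin (d + 1)) R :=
  Matrix.of fun i j => if (j : ℕ) ≤ i then coeff (i - j) g else 0

def coeffVec (d : ℕ) (h : R⟦X⟧) : Fin (d + 1) → R := fun i => coeff i h

end PowerSeries

end

open Matrix

theorem hankel_mul_transpose_lowerToeplitz_apply (d : ℕ) (f g : ℝ⟦X⟧) (a j : Fin (d + 1)) :
    (hankel d f * (lowerToeplitz d g)ᵀ) a j = hankelToeplitz f g a j := by
  simp only [Matrix.mul_apply, transpose_apply, hankel, lowerToeplitz, of_apply, mul_ite, mul_zero]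
  exact Fin.sum_ite_val_le j fun b => coeff (a + b) f * coeff (j - b) g

theorem lowerToeplitz_mul_hankel_mul_transpose_apply (d : ℕ) (f g : ℝ⟦X⟧) (i j : Fin (d + 1)) :
    (lowerToeplitz d g * hankel d f * (lowerToeplitz d g)ᵀ) i j = hankelCongr f g i j := by
  rw [Matrix.mul_assoc, Matrix.mul_apply]
  simp only [hankel_mul_transpose_lowerToeplitz_apply]
  simp only [lowerToeplitz, of_apply, ite_mul, zero_mul]
  exact Fin.sum_ite_val_le i fun a => coeff (i - a) g * hankelToeplitz f g a j

theorem lowerToeplitz_mul_hankel_mul_transpose_add_smul_hankel {f g : ℝ⟦X⟧} {α β γ : ℝ}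
    (heq : f * g = C α * g + C β * X * g + C γ) (d : ℕ) :
    lowerToeplitz d g * hankel d f * (lowerToeplitz d g)ᵀ + γ • hankel d g
      = vecMulVec (coeffVec d g) (coeffVec d (f * g))
        + vecMulVec (coeffVec d (f * g - C α * g)) (coeffVec d g) := by
  ext i j
  rw [Matrix.add_apply, lowerToeplitz_mul_hankel_mul_transpose_apply]
  simp only [Matrix.smul_apply, smul_eq_mul, Matrix.add_apply, vecMulVec_apply, coeffVec, hankel,
    of_apply]
  exact hankelCongr_add_mul_coeff_add heq i j

/-- Rank comparison: if `f·g = α·g + β·x·g + γ`, `f(0) ≠ α` and `g(0) ≠ 0`, then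
`rank(H[f]^{(d,d)}) ≥ rank(H[g]^{(d,d)}) − 3`. -/
theorem hankel_rank_comparison (f g : PowerSeries ℝ) (α β γ : ℝ)
    (hf : PowerSeries.coeff 0 f ≠ α) (hg : PowerSeries.coeff 0 g ≠ 0)
    (heq : f * g = PowerSeries.C α * g + PowerSeries.C β * PowerSeries.X * g
      + PowerSeries.C γ) (d : ℕ) :
    (hankel d g).rank ≤ (hankel d f).rank + 3 := by
  have hγ : γ ≠ 0 := by
    have h0 : coeff 0 f * coeff 0 g = α * coeff 0 g + γ := by
      simpa [coeff_zero_eq_constantCoeff] using congrArg (coeff 0) heq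
    have hγ_eq : γ = (coeff 0 f - α) * coeff 0 g := by linear_combination -h0
    exact hγ_eq ▸ mul_ne_zero (sub_ne_zero.2 hf) hg
  set L : Matrix (Fin (d + 1)) (Fin (d + 1)) ℝ := lowerToeplitz d g
  calc (hankel d g).rank = (γ • hankel d g).rank :=
        (rank_smul_of_mem_nonZeroDivisors _ (mem_nonZeroDivisors_of_ne_zero hγ)).symm
    _ = (vecMulVec (coeffVec d g) (coeffVec d (f * g))
          + vecMulVec (coeffVec d (f * g - C α * g)) (coeffVec d g)
          - L * hankel d f * Lᵀ).rank := by
        rw [← lowerToeplitz_mul_hankel_mul_transpose_add_smul_hankel heq, add_sub_cancel_left]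
    _ ≤ 1 + 1 + (hankel d f).rank := by
        grw [rank_sub_le, rank_add_le, rank_vecMulVec_le, rank_vecMulVec_le,
          rank_mul_le_left, rank_mul_le_right]
    _ ≤ (hankel d f).rank + 3 := by omega
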